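/- Let G ∈ 𝓕, let 0 < ε ≤ 1, let p ∈ ℕ, and let (y_i)_{i=0}^p be a finite trajectory of y_0 under G with y_0 > 2ε/9 and y_p < ε/3. Then there exists a descending interval trajectory ([a_i, b_i])_{i=0}^p under G such that [a_i, b_i] ⊆ [y_i − ε, y_i + ε] for each i ∈ {0, 1, ..., p} and b_p − a_p ≥ ε²/9. -/
import Mathlib


open Set Filter Topology

/-- One-sided Mahavier product of a relation `F` on `X`. -/
def MahavierPlus {X : Type*} (F : Set (X × X)) : Set (ℕ → X) :=
  {x | ∀ n : ℕ, (x n, x (n + 1)) ∈ F}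

/-- Two-sided Mahavier product of a relation `F` on `X`. -/
def MahavierTwo {X : Type*} (F : Set (X × X)) : Set (ℤ → X) :=
  {x | ∀ n : ℤ, (x n, x (n + 1)) ∈ F}

/-- The shift map on the one-sided Mahavier product. -/
def shiftPlus {X : Type*} (F : Set (X × X)) (x : MahavierPlus F) : MahavierPlus F :=
  ⟨fun n => (x : ℕ → X) (n + 1), fun n => x.2 (n + 1)⟩

/-- The shift map on the two-sided Mahavier product. -/
def shiftTwo {X : Type*} (F : Set (X × X)) (x : MahavierTwo F) : MahavierTwo F :=
  ⟨fun n => (x : ℤ → X) (n + 1), fun n => x.2 (n + 1)⟩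

/-- The metric `D(x,y) = sup_{n ≥ 1} d(x_n, y_n)/2^n` on one-sided sequences
(coordinates are indexed from `0` here, so the weight is `2^(n+1)`). -/
noncomputable def DPlus {X : Type*} [PseudoMetricSpace X] (x y : ℕ → X) : ℝ :=
  ⨆ n : ℕ, dist (x n) (y n) / 2 ^ (n + 1)

/-- The metric `D(x,y) = sup_{n ∈ ℤ} d(x_n, y_n)/2^{|n|}` on two-sided sequences. -/
noncomputable def DTwo {X : Type*} [PseudoMetricSpace X] (x y : ℤ → X) : ℝ :=
  ⨆ n : ℤ, dist (x n) (y n) / 2 ^ n.natAbs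

/-- Topological transitivity. -/
def TopTransitive {Y : Type*} [TopologicalSpace Y] (f : Y → Y) : Prop :=
  ∀ U V : Set Y, IsOpen U → IsOpen V → U.Nonempty → V.Nonempty →
    ∃ n : ℕ, (f^[n] '' U ∩ V).Nonempty

/-- Topological mixing. -/
def TopMixing {Y : Type*} [TopologicalSpace Y] (f : Y → Y) : Prop :=
  ∀ U V : Set Y, IsOpen U → IsOpen V → U.Nonempty → V.Nonempty →
    ∃ n₀ : ℕ, ∀ n : ℕ, n₀ ≤ n → (f^[n] '' U ∩ V).Nonempty

/-- The shadowing property for a map `f` with respect to a distance `dY`. -/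
def ShadowingProp {Y : Type*} (dY : Y → Y → ℝ) (f : Y → Y) : Prop :=
  ∀ ε : ℝ, 0 < ε → ∃ δ : ℝ, 0 < δ ∧ ∀ x : ℕ → Y,
    (∀ k : ℕ, dY (f (x k)) (x (k + 1)) < δ) →
    ∃ y : Y, ∀ k : ℕ, dY (f^[k] y) (x k) < ε

/-- The specification property for a map `f` with respect to a distance `dY`. -/
def SpecProp {Y : Type*} (dY : Y → Y → ℝ) (f : Y → Y) : Prop :=
  ∀ ε : ℝ, 0 < ε → ∃ N : ℕ, 0 < N ∧ ∀ n : ℕ, 0 < n →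
    ∀ x : Fin n → Y, ∀ k l : Fin n → ℕ,
      (∀ i, k i ≤ l i) →
      (∀ i j : Fin n, (i : ℕ) + 1 = (j : ℕ) → l i + N ≤ k j) →
      ∃ y : Y, ∀ i : Fin n, ∀ m : ℕ, k i ≤ m → m ≤ l i →
        dY (f^[m] y) (f^[m] (x i)) ≤ ε

/-- The CR-specification property for the one-sided Mahavier product of `F`. -/
def CRSpec {X : Type*} [PseudoMetricSpace X] (F : Set (X × X)) : Prop :=
  ∀ ε : ℝ, 0 < ε → ∃ N : ℕ, 0 < N ∧ ∀ n : ℕ, 0 < n →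
    ∀ x : Fin n → MahavierPlus F, ∀ k l : Fin n → ℕ,
      (∀ i, k i ≤ l i) →
      (∀ i j : Fin n, (i : ℕ) + 1 = (j : ℕ) → l i + N ≤ k j) →
      ∃ y : MahavierPlus F, ∀ i : Fin n, ∀ m : ℕ, k i ≤ m → m ≤ l i →
        dist ((x i : ℕ → X) m) ((y : ℕ → X) m) ≤ ε

/-- The image of a set under a relation. -/
def relImage {X : Type*} (F : Set (X × X)) (A : Set X) : Set X :=
  {y | ∃ a ∈ A, (a, y) ∈ F}

/-- Composition of relations. -/
def relComp {X : Type*} (F G : Set (X × X)) : Set (X × X) :=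
  {p | ∃ z : X, (p.1, z) ∈ F ∧ (z, p.2) ∈ G}

/-- Iterated composition `F^n` of a relation with itself. -/
def relPow {X : Type*} (F : Set (X × X)) : ℕ → Set (X × X)
  | 0 => {p | p.1 = p.2}
  | n + 1 => relComp (relPow F n) F

/-- Membership in the family `𝓕`: `G = F_A` for some finite set `A` of positive reals
containing `3`, `1`, and `1/2`, all of whose elements lie in `[1/3, 3]`, where
`F_A = {(x,y) ∈ [0,1]² : y = a·x for some a ∈ A}`. -/
def MemFamF (G : Set (ℝ × ℝ)) : Prop :=
  ∃ A : Finset ℝ, (3 : ℝ) ∈ A ∧ (1 : ℝ) ∈ A ∧ (1 / 2 : ℝ) ∈ A ∧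
    (∀ a ∈ A, (1 / 3 : ℝ) ≤ a ∧ a ≤ 3) ∧
    G = {p : ℝ × ℝ | p.1 ∈ Set.Icc (0 : ℝ) 1 ∧ p.2 ∈ Set.Icc (0 : ℝ) 1 ∧
          ∃ a ∈ A, p.2 = a * p.1}

set_option maxHeartbeats 1600000 in
/-- Given `G ∈ 𝓕`, `0 < ε ≤ 1`, and a finite trajectory
`(y_i)_{i=0}^p` under `G` with `y_0 > 2ε/9` and `y_p < ε/3`, there is a descending
interval trajectory `([a_i, b_i])_{i=0}^p` under `G` with `[a_i,b_i] ⊆ [y_i−ε, y_i+ε]`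
for all `i` and `b_p − a_p ≥ ε²/9`. -/
theorem stmt7 (G : Set (ℝ × ℝ)) (hG : MemFamF G)
    (ε : ℝ) (hε0 : 0 < ε) (hε1 : ε ≤ 1)
    (p : ℕ) (y : ℕ → ℝ) (hmem : ∀ i ≤ p, y i ∈ Set.Icc (0 : ℝ) 1)
    (htraj : ∀ i < p, (y i, y (i + 1)) ∈ G)
    (hy0 : 2 * ε / 9 < y 0) (hyp : y p < ε / 3) :
    ∃ a b : ℕ → ℝ,
      (∀ i ≤ p, a i ≤ b i ∧ Set.Icc (a i) (b i) ⊆ Set.Icc (0 : ℝ) 1) ∧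
      (∀ i < p, Set.Icc (a (i + 1)) (b (i + 1)) ⊆ relImage G (Set.Icc (a i) (b i))) ∧
      (∀ i ≤ p, Set.Icc (a i) (b i) ⊆ Set.Icc (y i - ε) (y i + ε)) ∧
      ε ^ 2 / 9 ≤ b p - a p := by
  classical
  obtain ⟨A, h3A, h1A, hhalfA, hbdA, rfl⟩ := hG
  -- extract the multiplier at each step
  have hfrac : ∀ i < p, ∃ a : ℝ, a ∈ A ∧ (1/3 : ℝ) ≤ a ∧ a ≤ 3 ∧ y (i+1) = a * y i := by
    intro i hip
    obtain ⟨-, -, a, haA, ha⟩ := htraj i hip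
    exact ⟨a, haA, (hbdA a haA).1, (hbdA a haA).2, ha⟩
  -- the index after which the trajectory stays below ε/3
  have hP : ∃ k : ℕ, ∀ j, k ≤ j → j ≤ p → y j ≤ ε/3 := by
    refine ⟨p, fun j hpj hjp => ?_⟩
    have : j = p := le_antisymm hjp hpj
    rw [this]; linarith
  obtain ⟨k, hk_le, hk_spec, hk_min⟩ :
      ∃ k : ℕ, k ≤ p ∧ (∀ j, k ≤ j → j ≤ p → y j ≤ ε/3) ∧
        (∀ m, m < k → ¬ ∀ j, m ≤ j → j ≤ p → y j ≤ ε/3) := by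
    refine ⟨Nat.find hP, ?_, Nat.find_spec hP, fun m hm => Nat.find_min hP hm⟩
    refine Nat.find_le fun j hpj hjp => ?_
    have : j = p := le_antisymm hjp hpj
    rw [this]; linarith
  -- y k > ε/9
  have hεk : ε/9 < y k := by
    rcases Nat.eq_zero_or_pos k with hk0 | hk0
    · rw [hk0]; linarith
    · have hmk : k - 1 < k := by omega
      have hnot := hk_min (k-1) hmk
      push_neg at hnot
      obtain ⟨j, hj1, hj2, hj3⟩ := hnot
      have hjk : j = k - 1 := by
        by_contra h
        have : k ≤ j := by omega
        exact absurd (hk_spec j this hj2) (by linarith)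
      subst hjk
      have hlt : k - 1 < p := by omega
      obtain ⟨a, -, ha13, -, heq⟩ := hfrac (k-1) hlt
      have hsucc : (k - 1) + 1 = k := by omega
      rw [hsucc] at heq
      have hypos : 0 < y (k-1) := by linarith
      nlinarith
  -- positivity of y j for j ≤ k
  have hposd : ∀ d, d ≤ k → 0 < y (k - d) := by
    intro d
    induction d with
    | zero => intro _; simpa using (by linarith [hεk, hε0] : 0 < y k)
    | succ d ih =>
      intro hd
      have hyd : 0 < y (k - d) := ih (by omega)
      have hlt : k - (d+1) < p := by omega
      obtain ⟨a, -, ha13, ha3, heq⟩ := hfrac (k - (d+1)) hlt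
      have hsucc : (k - (d+1)) + 1 = k - d := by omega
      rw [hsucc] at heq
      by_contra h
      push_neg at h
      have ha0 : 0 < a := by linarith
      nlinarith
  have hpos : ∀ j, j ≤ k → 0 < y j := by
    intro j hj
    have := hposd (k - j) (by omega)
    have hkj : k - (k - j) = j := by omega
    rwa [hkj] at this
  -- the intervals
  refine ⟨fun i => (1 - ε) * y (min i k), fun i => y (min i k), ?_, ?_, ?_, ?_⟩
  · -- endpoints ordered and in [0,1]
    intro i hip
    dsimp only
    have hm : min i k ≤ p := le_trans (min_le_right i k) hk_le
    obtain ⟨hy0', hy1'⟩ := hmem (min i k) hm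
    constructor
    · nlinarith
    · exact Set.Icc_subset_Icc (by nlinarith) hy1'
  · -- descending interval trajectory
    intro i hip
    dsimp only
    rcases lt_or_ge i k with hik | hik
    · have hmi : min i k = i := min_eq_left hik.le
      have hmi1 : min (i+1) k = i + 1 := min_eq_left (by omega)
      rw [hmi, hmi1]
      obtain ⟨a, haA, ha13, ha3, heq⟩ := hfrac i hip
      have hyi : 0 < y i := hpos i hik.le
      have hyi1 : 0 < y (i+1) := by nlinarith
      have ha0 : 0 < a := by nlinarith
      intro z hz
      obtain ⟨hz1, hz2⟩ := hz
      refine ⟨z / a, ⟨?_, ?_⟩, ⟨?_, ?_⟩, ⟨?_, ?_⟩, a, haA, ?_⟩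
      · rw [le_div_iff₀ ha0]; nlinarith
      · rw [div_le_iff₀ ha0]; nlinarith
      · have : (0:ℝ) ≤ z := by nlinarith
        positivity
      · rw [div_le_iff₀ ha0]
        have hyile : y i ≤ 1 := (hmem i (by omega)).2
        nlinarith
      · have hyi1le : y (i+1) ≤ 1 := (hmem (i+1) (by omega)).2
        nlinarith
      · have hyi1le : y (i+1) ≤ 1 := (hmem (i+1) (by omega)).2
        linarith
      · field_simp
    · have hmi : min i k = k := min_eq_right hik
      have hmi1 : min (i+1) k = k := min_eq_right (by omega)
      rw [hmi, hmi1]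
      intro z hz
      obtain ⟨hz1, hz2⟩ := hz
      have hyk0 : 0 < y k := hpos k le_rfl
      have hyk1 : y k ≤ 1 := (hmem k hk_le).2
      refine ⟨z, ⟨hz1, hz2⟩, ⟨?_, ?_⟩, ⟨?_, ?_⟩, 1, h1A, ?_⟩
      · nlinarith
      · linarith
      · nlinarith
      · linarith
      · ring
  · -- within ε of the trajectory
    intro i hip
    dsimp only
    rcases le_or_gt i k with hik | hik
    · have hmi : min i k = i := min_eq_left hik
      rw [hmi]
      have hyile : y i ≤ 1 := (hmem i hip).2
      have hyi0 : 0 ≤ y i := (hmem i hip).1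
      exact Set.Icc_subset_Icc (by nlinarith) (by linarith)
    · have hmi : min i k = k := min_eq_right hik.le
      rw [hmi]
      have hyi : y i ≤ ε/3 := hk_spec i hik.le hip
      have hyi0 : 0 ≤ y i := (hmem i hip).1
      have hyk : y k ≤ ε/3 := hk_spec k le_rfl hk_le
      have hyk0 : 0 < y k := hpos k le_rfl
      exact Set.Icc_subset_Icc (by nlinarith) (by linarith)
  · -- length at the end
    have hmp : min p k = k := min_eq_right hk_le
    dsimp only
    rw [hmp]
    nlinarith
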